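/- arXiv:2303.18224 — 2 statements merged into one kernel-verified Lean document; each statement's English description precedes it below -/
import Mathlib

section
/- Let {A^a}_{a∈A} be a finite family of d×d complex matrices, H a Hermitian d×d matrix, and f : S_{t₀} → ℂ; let Â^a_f denote the discrete operator Fourier transform. Then: (i) for every a ∈ A and every ω ∈ ℝ, (Â^a_f(ω))† equals the discrete operator Fourier transform of (A^a)† with weight f* (the pointwise complex conjugate of f) evaluated at −ω; (ii) ∑_{a∈A} ∑_{ω̄∈S_{ω₀}} Â^a_f(ω̄)† Â^a_f(ω̄) = ∑_{a∈A} ∑_{t̄∈S_{t₀}} |f(t̄)|² e^{iHt̄} (A^a)†A^a e^{−iHt̄}, and this matrix is ≼ ‖∑_{a∈A}(A^a)†A^a‖·(∑_{t̄∈S_{t₀}}|f(t̄)|²)·I in the Loewner order; (iii) likewise ∑_{a,ω̄} Â^a_f(ω̄) Â^a_f(ω̄)† = ∑_{a,t̄} |f(t̄)|² e^{iHt̄} A^a(A^a)† e^{−iHt̄} ≼ ‖∑_{a∈A}A^a(A^a)†‖·(∑_{t̄}|f(t̄)|²)·I. -/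
/-!
At the grid frequencies `ω₀ j` the transform is `N^{-1/2} ∑ₖ ζ^{-jk} f(t₀k) A(t₀k)` with
`ζ = e^{iω₀t₀} = e^{2πi/N}` a primitive `N`-th root of unity. Since `gridS N` is a window of `N`
consecutive integers, `∑ⱼ ζ^{j(s-t)} = N δₛₜ` for `s, t ∈ gridS N`, so summing the products over `j`
leaves only the diagonal. The Heisenberg evolution is conjugation by the unitary `e^{iHt}`, i.e. a
⋆-automorphism, which turns `f̄ f A(t)ᴴ A(t)` into `|f|² (AᴴA)(t)`; it is also monotone for the
Loewner order, so the bound reduces to `M ≤ ‖M‖ • 1` for Hermitian `M`.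
-/

open scoped ComplexOrder Matrix

namespace Stmt10

/-- The space of `d × d` complex matrices. -/
abbrev Mat (d : ℕ) := Matrix (Fin d) (Fin d) ℂ

/-- Operator (spectral) norm of a complex matrix. -/
noncomputable def opNorm {m n : Type*} [Fintype m] [Fintype n] [DecidableEq n]
    (A : Matrix m n ℂ) : ℝ :=
  ‖LinearMap.toContinuousLinearMap (Matrix.toEuclideanLin A)‖

/-- The index grid `S = {-⌈(N-1)/2⌉, …, -1, 0, 1, …, ⌊(N-1)/2⌋}` for the discrete Fourier
transform on `N` points. -/
noncomputable def gridS (N : ℕ) : Finset ℤ := Finset.Icc (-((N : ℤ) / 2)) (((N : ℤ) - 1) / 2)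

/-- Heisenberg evolution `A(t) = e^{iHt} A e^{-iHt}`. -/
noncomputable def heis {d : ℕ} (H A : Mat d) (t : ℝ) : Mat d :=
  NormedSpace.exp ((Complex.I * (t : ℂ)) • H) * A *
    NormedSpace.exp ((-(Complex.I * (t : ℂ))) • H)

/-- The discrete operator Fourier transform
`Â_f(ω) = N^{-1/2} ∑_{t̄ ∈ S_{t₀}} e^{-iω t̄} f(t̄) e^{iH t̄} A e^{-iH t̄}`. -/
noncomputable def doft {d : ℕ} (N : ℕ) (t₀ : ℝ) (H : Mat d) (f : ℝ → ℂ) (A : Mat d) (ω : ℝ) :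
    Mat d :=
  (((Real.sqrt N)⁻¹ : ℝ) : ℂ) •
    ∑ k ∈ gridS N, (Complex.exp (-(Complex.I * (ω : ℂ) * ((t₀ * k : ℝ) : ℂ))) * f (t₀ * k)) •
      heis H A (t₀ * k)

open Finset Complex

section Orthogonality

variable {K : Type*} [Field K] {N : ℕ}

lemma gridS_zero : gridS 0 = ∅ := by
  simp [gridS]

lemma card_gridS (N : ℕ) : #(gridS N) = N := by
  rw [gridS, Int.card_Icc]
  omega

lemma gridS_eq_map (N : ℕ) :
    gridS N = (range N).map (Nat.castEmbedding.trans (addLeftEmbedding (-((N : ℤ) / 2)))) := by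
  ext k
  simp only [gridS, mem_Icc, mem_map, mem_range, Function.Embedding.trans_apply,
    Nat.castEmbedding_apply, addLeftEmbedding_apply]
  refine ⟨fun hk => ⟨(k + (N : ℤ) / 2).toNat, by omega, by omega⟩, ?_⟩
  rintro ⟨j, hj, rfl⟩
  omega

lemma natAbs_sub_lt_of_mem_gridS {s t : ℤ} (hs : s ∈ gridS N) (ht : t ∈ gridS N) :
    (s - t).natAbs < N := by
  simp only [gridS, mem_Icc] at hs ht
  omega

lemma sum_gridS_zpow_eq_zero {z : K} (hz : z ≠ 1) (hzN : z ^ N = 1) :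
    ∑ k ∈ gridS N, z ^ k = 0 := by
  rcases N.eq_zero_or_pos with rfl | hN
  · simp [gridS_zero]
  have hz₀ : z ≠ 0 := by
    rintro rfl
    simp [hN.ne'] at hzN
  simp only [gridS_eq_map, sum_map, Function.Embedding.trans_apply, Nat.castEmbedding_apply,
    addLeftEmbedding_apply, zpow_add₀ hz₀, zpow_natCast, ← mul_sum, geom_sum_eq hz, hzN,
    sub_self, zero_div, mul_zero]

lemma sum_gridS_zpow_sub {ζ : K} (hζ : IsPrimitiveRoot ζ N) {s t : ℤ}
    (hs : s ∈ gridS N) (ht : t ∈ gridS N) :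
    ∑ j ∈ gridS N, (ζ ^ (s - t)) ^ j = if s = t then (N : K) else 0 := by
  split_ifs with hst
  · simp [hst, card_gridS]
  refine sum_gridS_zpow_eq_zero (fun h => hst ?_) ?_
  · rw [hζ.zpow_eq_one_iff_dvd] at h
    have := Int.eq_zero_of_dvd_of_natAbs_lt_natAbs h (natAbs_sub_lt_of_mem_gridS hs ht)
    omega
  · rw [← zpow_natCast, ← zpow_mul, mul_comm, zpow_mul, zpow_natCast, hζ.pow_eq_one, one_zpow]

/-- Parseval's identity for the discrete Fourier transform on the window `gridS N`. -/
theorem sum_gridS_mul_sum_gridS {R : Type*} [Ring R] [Algebra K R] {ζ : K}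
    (hζ : IsPrimitiveRoot ζ N) (X Y : ℤ → R) :
    ∑ j ∈ gridS N, (∑ s ∈ gridS N, ζ ^ (j * s) • X s) * (∑ t ∈ gridS N, ζ ^ (-(j * t)) • Y t) =
      (N : K) • ∑ s ∈ gridS N, X s * Y s := by
  rcases N.eq_zero_or_pos with rfl | hN
  · simp [gridS_zero]
  have hζ₀ := hζ.ne_zero hN.ne'
  have hprod (j s t : ℤ) : ζ ^ (j * s) * ζ ^ (-(j * t)) = (ζ ^ (s - t)) ^ j := by
    rw [← zpow_add₀ hζ₀, ← zpow_mul]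
    ring_nf
  calc _ = ∑ s ∈ gridS N, ∑ t ∈ gridS N, (∑ j ∈ gridS N, (ζ ^ (s - t)) ^ j) • (X s * Y t) := by
        simp only [sum_mul_sum, smul_mul_smul_comm, hprod, sum_smul]
        rw [sum_comm]
        exact sum_congr rfl fun s _ => sum_comm
    _ = ∑ s ∈ gridS N, (N : K) • (X s * Y s) := by
        refine sum_congr rfl fun s hs => ?_
        rw [sum_eq_single_of_mem s hs fun t ht hts => ?_, sum_gridS_zpow_sub hζ hs hs, if_pos rfl]
        rw [sum_gridS_zpow_sub hζ hs ht, if_neg (Ne.symm hts), zero_smul]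
    _ = _ := (smul_sum ..).symm

end Orthogonality

section Heisenberg

variable {d : ℕ} {H : Mat d}

lemma star_exp_I_mul_smul (hH : H.IsHermitian) (t : ℝ) :
    star (NormedSpace.exp ((I * t) • H)) = NormedSpace.exp ((-(I * t)) • H) := by
  rw [Matrix.star_eq_conjTranspose, ← Matrix.exp_conjTranspose, Matrix.conjTranspose_smul, hH.eq,
    star_mul', Complex.star_def, conj_I, conj_ofReal, neg_mul]

lemma exp_I_mul_smul_mem_unitary (hH : H.IsHermitian) (t : ℝ) :
    NormedSpace.exp ((I * t) • H) ∈ unitary (Mat d) := by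
  rw [← Matrix.unitaryGroup, Matrix.mem_unitaryGroup_iff, star_exp_I_mul_smul hH, neg_smul,
    ← Matrix.exp_add_of_commute _ _ ((Commute.refl ((I * t) • H)).neg_right), add_neg_cancel,
    NormedSpace.exp_zero]

noncomputable def propagator (hH : H.IsHermitian) (t : ℝ) : unitary (Mat d) :=
  ⟨NormedSpace.exp ((I * t) • H), exp_I_mul_smul_mem_unitary hH t⟩

lemma heis_eq_conjStarAlgAut (hH : H.IsHermitian) (A : Mat d) (t : ℝ) :
    heis H A t = Unitary.conjStarAlgAut ℂ (Mat d) (propagator hH t) A := by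
  rw [Unitary.conjStarAlgAut_apply, propagator, star_exp_I_mul_smul hH]
  rfl

lemma conjTranspose_heis (hH : H.IsHermitian) (A : Mat d) (t : ℝ) :
    (heis H A t)ᴴ = heis H Aᴴ t := by
  simp only [heis_eq_conjStarAlgAut hH, ← Matrix.star_eq_conjTranspose, map_star]

lemma heis_mul_heis (hH : H.IsHermitian) (A B : Mat d) (t : ℝ) :
    heis H A t * heis H B t = heis H (A * B) t := by
  simp only [heis_eq_conjStarAlgAut hH, map_mul]

lemma heis_sum (hH : H.IsHermitian) {ι : Type*} (s : Finset ι) (A : ι → Mat d) (t : ℝ) :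
    heis H (∑ i ∈ s, A i) t = ∑ i ∈ s, heis H (A i) t := by
  simp only [heis_eq_conjStarAlgAut hH, map_sum]

section Loewner

open scoped Matrix.Norms.L2Operator MatrixOrder

lemma heis_le_opNorm_smul_one (hH : H.IsHermitian) {M : Mat d} (hM : M.IsHermitian) (t : ℝ) :
    heis H M t ≤ opNorm M • (1 : Mat d) := by
  have hM_le : M ≤ opNorm M • (1 : Mat d) := by
    -- `opNorm M` is by definition the norm `‖M‖` of `Matrix.Norms.L2Operator`.
    have := IsSelfAdjoint.le_algebraMap_norm_self hM
    rwa [Algebra.algebraMap_eq_smul_one] at this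
  calc heis H M t ≤ heis H (opNorm M • (1 : Mat d)) t := by
        simp only [heis_eq_conjStarAlgAut hH, Unitary.conjStarAlgAut_apply]
        exact star_right_conjugate_le_conjugate hM_le _
    _ = opNorm M • (1 : Mat d) := by
        rw [← Complex.coe_smul, heis_eq_conjStarAlgAut hH, map_smul, map_one]

lemma sum_sum_smul_heis_le (hH : H.IsHermitian) {ι κ : Type*} [Fintype ι] (X : ι → Mat d)
    (hX : ∀ i, (X i).IsHermitian) (s : Finset κ) (r τ : κ → ℝ) (hr : ∀ k ∈ s, 0 ≤ r k) :
    ∑ i, ∑ k ∈ s, (r k : ℂ) • heis H (X i) (τ k) ≤ (opNorm (∑ i, X i) * ∑ k ∈ s, r k) • 1 := by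
  have hsum : (∑ i, X i).IsHermitian := isSelfAdjoint_sum _ fun i _ => hX i
  calc ∑ i, ∑ k ∈ s, (r k : ℂ) • heis H (X i) (τ k)
        = ∑ k ∈ s, r k • heis H (∑ i, X i) (τ k) := by
        simp only [heis_sum hH, smul_sum, Complex.coe_smul]
        exact sum_comm
    _ ≤ ∑ k ∈ s, r k • opNorm (∑ i, X i) • (1 : Mat d) :=
        sum_le_sum fun k hk => smul_le_smul_of_nonneg_left
          (heis_le_opNorm_smul_one hH hsum (τ k)) (hr k hk)
    _ = (opNorm (∑ i, X i) * ∑ k ∈ s, r k) • 1 := by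
        rw [← sum_smul, smul_smul, mul_comm]

end Loewner

end Heisenberg

section FourierTransform

variable {d : ℕ} {N : ℕ} {t₀ : ℝ} {H : Mat d}

lemma conjTranspose_doft (hH : H.IsHermitian) (f : ℝ → ℂ) (A : Mat d) (ω : ℝ) :
    (doft N t₀ H f A ω)ᴴ = doft N t₀ H (fun t => star (f t)) Aᴴ (-ω) := by
  simp only [doft, Matrix.conjTranspose_smul, Matrix.conjTranspose_sum, conjTranspose_heis hH,
    star_mul', Complex.star_def, conj_ofReal, ← exp_conj, map_neg, map_mul, conj_I]
  congr 2 with k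
  push_cast
  ring_nf

lemma doft_mul_intCast {ω₀ : ℝ} (hωt : ω₀ * t₀ = 2 * Real.pi / N) (f : ℝ → ℂ) (A : Mat d)
    (j : ℤ) :
    doft N t₀ H f A (ω₀ * j) = (((Real.sqrt N)⁻¹ : ℝ) : ℂ) •
      ∑ k ∈ gridS N, exp (2 * Real.pi * I / N) ^ (-(j * k)) • (f (t₀ * k) • heis H A (t₀ * k)) := by
  have hωt' : (ω₀ : ℂ) * t₀ = 2 * Real.pi / N := by exact_mod_cast hωt
  simp only [doft, smul_smul, ← exp_int_mul]
  refine congrArg _ (sum_congr rfl fun k _ => ?_)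
  congr 3
  push_cast
  linear_combination (-(j * k) * I) * hωt'

lemma conjTranspose_doft_mul_intCast {ω₀ : ℝ} (hωt : ω₀ * t₀ = 2 * Real.pi / N)
    (hH : H.IsHermitian) (f : ℝ → ℂ) (A : Mat d) (j : ℤ) :
    (doft N t₀ H f A (ω₀ * j))ᴴ = (((Real.sqrt N)⁻¹ : ℝ) : ℂ) •
      ∑ k ∈ gridS N,
        exp (2 * Real.pi * I / N) ^ (j * k) • (star (f (t₀ * k)) • heis H Aᴴ (t₀ * k)) := by
  rw [conjTranspose_doft hH, ← show ω₀ * ((-j : ℤ) : ℝ) = -(ω₀ * j) by push_cast; ring,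
    doft_mul_intCast hωt]
  simp only [neg_mul, neg_neg]

lemma ofReal_inv_sqrt_mul_self_mul_natCast (hN : N ≠ 0) :
    (((Real.sqrt N)⁻¹ : ℝ) : ℂ) * (((Real.sqrt N)⁻¹ : ℝ) : ℂ) * N = 1 := by
  rw [← ofReal_mul, ← mul_inv, Real.mul_self_sqrt N.cast_nonneg]
  push_cast
  field_simp

lemma sum_conjTranspose_doft_mul_doft {ω₀ : ℝ} (hN : N ≠ 0) (hωt : ω₀ * t₀ = 2 * Real.pi / N)
    (hH : H.IsHermitian) (f : ℝ → ℂ) (A : Mat d) :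
    ∑ j ∈ gridS N, (doft N t₀ H f A (ω₀ * j))ᴴ * doft N t₀ H f A (ω₀ * j) =
      ∑ k ∈ gridS N, ((‖f (t₀ * k)‖ ^ 2 : ℝ) : ℂ) • heis H (Aᴴ * A) (t₀ * k) := by
  simp only [conjTranspose_doft_mul_intCast hωt hH]
  simp only [doft_mul_intCast hωt, smul_mul_smul_comm]
  rw [← smul_sum, sum_gridS_mul_sum_gridS (isPrimitiveRoot_exp N hN), smul_smul,
    ofReal_inv_sqrt_mul_self_mul_natCast hN, one_smul]
  refine sum_congr rfl fun k _ => ?_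
  rw [smul_mul_smul_comm, heis_mul_heis hH, Complex.star_def, conj_mul']
  push_cast
  rfl

lemma sum_doft_mul_conjTranspose_doft {ω₀ : ℝ} (hN : N ≠ 0) (hωt : ω₀ * t₀ = 2 * Real.pi / N)
    (hH : H.IsHermitian) (f : ℝ → ℂ) (A : Mat d) :
    ∑ j ∈ gridS N, doft N t₀ H f A (ω₀ * j) * (doft N t₀ H f A (ω₀ * j))ᴴ =
      ∑ k ∈ gridS N, ((‖f (t₀ * k)‖ ^ 2 : ℝ) : ℂ) • heis H (A * Aᴴ) (t₀ * k) := by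
  have hζ_inv (n : ℤ) : exp (2 * Real.pi * I / N) ^ n = (exp (2 * Real.pi * I / N))⁻¹ ^ (-n) := by
    rw [inv_zpow', neg_neg]
  simp only [conjTranspose_doft_mul_intCast hωt hH]
  simp only [doft_mul_intCast hωt, smul_mul_smul_comm, hζ_inv, neg_neg]
  rw [← smul_sum, sum_gridS_mul_sum_gridS (isPrimitiveRoot_exp N hN).inv, smul_smul,
    ofReal_inv_sqrt_mul_self_mul_natCast hN, one_smul]
  refine sum_congr rfl fun k _ => ?_
  rw [smul_mul_smul_comm, heis_mul_heis hH, Complex.star_def, mul_conj']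
  push_cast
  rfl

end FourierTransform

theorem stmt10_general (d : ℕ) (N : ℕ) (hN : 0 < N) (ω₀ t₀ : ℝ)
    (hωt : ω₀ * t₀ = 2 * Real.pi / N)
    (H : Mat d) (hH : H.IsHermitian)
    (ι : Type) [Fintype ι] (A : ι → Mat d) (f : ℝ → ℂ) :
    -- (i) symmetry: `(Â^a_f(ω))† = (A^a†)^_{f*}(-ω)`
    (∀ (a : ι) (ω : ℝ),
      (doft N t₀ H f (A a) ω)ᴴ = doft N t₀ H (fun t => star (f t)) ((A a)ᴴ) (-ω)) ∧
    -- (ii) operator Parseval's identity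
    (∑ a : ι, ∑ k ∈ gridS N, (doft N t₀ H f (A a) (ω₀ * k))ᴴ * doft N t₀ H f (A a) (ω₀ * k) =
      ∑ a : ι, ∑ k ∈ gridS N, ((‖f (t₀ * k)‖ ^ 2 : ℝ) : ℂ) • heis H ((A a)ᴴ * A a) (t₀ * k)) ∧
    -- (ii) Loewner bound
    (((opNorm (∑ a : ι, (A a)ᴴ * A a) * ∑ k ∈ gridS N, ‖f (t₀ * k)‖ ^ 2 : ℝ) • (1 : Mat d) -
        ∑ a : ι, ∑ k ∈ gridS N,
          (doft N t₀ H f (A a) (ω₀ * k))ᴴ * doft N t₀ H f (A a) (ω₀ * k)).PosSemidef) ∧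
    -- (iii) operator Parseval's identity for the reversed order
    (∑ a : ι, ∑ k ∈ gridS N, doft N t₀ H f (A a) (ω₀ * k) * (doft N t₀ H f (A a) (ω₀ * k))ᴴ =
      ∑ a : ι, ∑ k ∈ gridS N, ((‖f (t₀ * k)‖ ^ 2 : ℝ) : ℂ) • heis H (A a * (A a)ᴴ) (t₀ * k)) ∧
    -- (iii) Loewner bound
    (((opNorm (∑ a : ι, A a * (A a)ᴴ) * ∑ k ∈ gridS N, ‖f (t₀ * k)‖ ^ 2 : ℝ) • (1 : Mat d) -
        ∑ a : ι, ∑ k ∈ gridS N,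
          doft N t₀ H f (A a) (ω₀ * k) * (doft N t₀ H f (A a) (ω₀ * k))ᴴ).PosSemidef) := by
  have parseval_left := fun a : ι => sum_conjTranspose_doft_mul_doft hN.ne' hωt hH f (A a)
  have parseval_right := fun a : ι => sum_doft_mul_conjTranspose_doft hN.ne' hωt hH f (A a)
  have weights_nonneg : ∀ k ∈ gridS N, 0 ≤ ‖f (t₀ * k)‖ ^ 2 := fun k _ => sq_nonneg _
  refine ⟨fun a => conjTranspose_doft hH f (A a), sum_congr rfl fun a _ => parseval_left a, ?_,
    sum_congr rfl fun a _ => parseval_right a, ?_⟩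
  · rw [sum_congr rfl fun a _ => parseval_left a]
    exact Matrix.le_iff.mp <| sum_sum_smul_heis_le hH _
      (fun a => Matrix.isHermitian_conjTranspose_mul_self (A a)) _ _ _ weights_nonneg
  · rw [sum_congr rfl fun a _ => parseval_right a]
    exact Matrix.le_iff.mp <| sum_sum_smul_heis_le hH _
      (fun a => Matrix.isHermitian_mul_conjTranspose_self (A a)) _ _ _ weights_nonneg

/-- Symmetry and operator Parseval's identity for the discrete operator
Fourier transform. -/
theorem stmt10 (d : ℕ) (hd : 1 ≤ d) (N : ℕ) (hN : 0 < N) (ω₀ t₀ : ℝ) (hω₀ : 0 < ω₀)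
    (ht₀ : 0 < t₀) (hωt : ω₀ * t₀ = 2 * Real.pi / N)
    (H : Mat d) (hH : H.IsHermitian)
    (ι : Type) [Fintype ι] (A : ι → Mat d) (f : ℝ → ℂ) :
    -- (i) symmetry: `(Â^a_f(ω))† = (A^a†)^_{f*}(-ω)`
    (∀ (a : ι) (ω : ℝ),
      (doft N t₀ H f (A a) ω)ᴴ = doft N t₀ H (fun t => star (f t)) ((A a)ᴴ) (-ω)) ∧
    -- (ii) operator Parseval's identity
    (∑ a : ι, ∑ k ∈ gridS N, (doft N t₀ H f (A a) (ω₀ * k))ᴴ * doft N t₀ H f (A a) (ω₀ * k) =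
      ∑ a : ι, ∑ k ∈ gridS N, ((‖f (t₀ * k)‖ ^ 2 : ℝ) : ℂ) • heis H ((A a)ᴴ * A a) (t₀ * k)) ∧
    -- (ii) Loewner bound
    (((opNorm (∑ a : ι, (A a)ᴴ * A a) * ∑ k ∈ gridS N, ‖f (t₀ * k)‖ ^ 2 : ℝ) • (1 : Mat d) -
        ∑ a : ι, ∑ k ∈ gridS N,
          (doft N t₀ H f (A a) (ω₀ * k))ᴴ * doft N t₀ H f (A a) (ω₀ * k)).PosSemidef) ∧
    -- (iii) operator Parseval's identity for the reversed order
    (∑ a : ι, ∑ k ∈ gridS N, doft N t₀ H f (A a) (ω₀ * k) * (doft N t₀ H f (A a) (ω₀ * k))ᴴ =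
      ∑ a : ι, ∑ k ∈ gridS N, ((‖f (t₀ * k)‖ ^ 2 : ℝ) : ℂ) • heis H (A a * (A a)ᴴ) (t₀ * k)) ∧
    -- (iii) Loewner bound
    (((opNorm (∑ a : ι, A a * (A a)ᴴ) * ∑ k ∈ gridS N, ‖f (t₀ * k)‖ ^ 2 : ℝ) • (1 : Mat d) -
        ∑ a : ι, ∑ k ∈ gridS N,
          doft N t₀ H f (A a) (ω₀ * k) * (doft N t₀ H f (A a) (ω₀ * k))ᴴ).PosSemidef) :=
  stmt10_general d N hN ω₀ t₀ hωt H hH ι A f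

end Stmt10
end

section
/- Let N be a positive integer, ω₀, t₀ > 0 with ω₀t₀ = 2π/N, and let K be a positive integer with 2K ≤ N; set T := K·t₀ and define the uniform weight f : S_{t₀} → ℂ by f(t̄) := (2T/t₀)^{−1/2}·𝟙(−T ≤ t̄ < T). Let f̂(ω̄) := N^{−1/2} ∑_{t̄∈S_{t₀}} e^{−iω̄t̄} f(t̄) denote its discrete Fourier transform. Then: (i) for every ω̄ ∈ S_{ω₀} with e^{iω̄t₀} ≠ 1, f̂(ω̄) = (2TN/t₀)^{−1/2}·(e^{−iω̄T} − e^{iω̄T})/(e^{−iω̄t₀} − 1); and (ii) for every positive integer m, ∑_{ω̄∈S_{ω₀}, |ω̄| > mω₀} |f̂(ω̄)|² ≤ π/(2mω₀T). -/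
/-!
On the grid the uniform weight is supported on the `2K` indices `-K ≤ k < K`, so `f̂(ω̄)` is a
multiple of the geometric sum `∑ zᵏ` with `z = e^{-iω̄t₀}`; summing it gives (i). In (i) the
numerator has modulus at most `2`, while Jordan's inequality gives
`|e^{-iω₀kt₀} - 1| = 2|sin(πk/N)| ≥ 4|k|/N` on the grid (where `2|k| ≤ N`). Hence
`|f̂(ω₀k)|² ≤ N/(8Kk²)`, and `∑_{|k|>m} k⁻² ≤ 2/m` turns this into `N/(4Km) = π/(2mω₀T)`.
-/

open Finset Complex

namespace Stmt12

/-- The index grid `S = {-⌈(N-1)/2⌉, …, -1, 0, 1, …, ⌊(N-1)/2⌋}` for the discrete Fourier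
transform on `N` points. -/
noncomputable def gridS (N : ℕ) : Finset ℤ := Finset.Icc (-((N : ℤ) / 2)) (((N : ℤ) - 1) / 2)

theorem geom_sum_Ico_zpow {𝕜 : Type*} [Field 𝕜] {x : 𝕜} (hx : x ≠ 0) (hx1 : x ≠ 1) {a b : ℤ}
    (hab : a ≤ b) : ∑ k ∈ Ico a b, x ^ k = (x ^ b - x ^ a) / (x - 1) := by
  rw [eq_div_iff (sub_ne_zero.2 hx1)]
  induction b, hab using Int.leInduction with
  | base => simp
  | succ b hab ih =>
    rw [Ico_add_one_right_eq_Icc, ← Ico_insert_right hab, sum_insert (by simp), add_mul, ih,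
      zpow_add_one₀ hx]
    ring

theorem sum_filter_lt_inv_sq_le (s : Finset ℤ) {m : ℕ} (hm : m ≠ 0) :
    ∑ k ∈ s with (m : ℤ) < k, ((k : ℝ) ^ 2)⁻¹ ≤ (m : ℝ)⁻¹ := by
  set M := max m (s.sup Int.toNat)
  have hsub : s.filter (fun k => (m : ℤ) < k) ⊆ (Ioc m M).map (Nat.castEmbedding : ℕ ↪ ℤ) := by
    intro k hk
    obtain ⟨hks, hmk⟩ := mem_filter.1 hk
    have : k.toNat ≤ s.sup Int.toNat := le_sup (f := Int.toNat) hks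
    simp only [mem_map, mem_Ioc, Nat.castEmbedding_apply]
    exact ⟨k.toNat, ⟨by omega, by omega⟩, by omega⟩
  calc ∑ k ∈ s with (m : ℤ) < k, ((k : ℝ) ^ 2)⁻¹
      ≤ ∑ k ∈ (Ioc m M).map (Nat.castEmbedding : ℕ ↪ ℤ), ((k : ℝ) ^ 2)⁻¹ :=
        sum_le_sum_of_subset_of_nonneg hsub fun _ _ _ => by positivity
    _ = ∑ n ∈ Ioc m M, ((n : ℝ) ^ 2)⁻¹ := by simp
    _ ≤ (m : ℝ)⁻¹ - (M : ℝ)⁻¹ := sum_Ioc_inv_sq_le_sub hm (le_max_left _ _)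
    _ ≤ (m : ℝ)⁻¹ := sub_le_self _ (by positivity)

theorem sum_filter_lt_abs_inv_sq_le (s : Finset ℤ) {m : ℕ} (hm : m ≠ 0) :
    ∑ k ∈ s with (m : ℤ) < |k|, ((k : ℝ) ^ 2)⁻¹ ≤ 2 / m := by
  have hsplit : s.filter (fun k => (m : ℤ) < |k|)
      = s.filter (fun k => (m : ℤ) < k) ∪ s.filter (fun k => (m : ℤ) < -k) := by
    rw [← filter_or]
    exact filter_congr fun k _ => lt_abs
  have hdisj : Disjoint (s.filter fun k => (m : ℤ) < k) (s.filter fun k => (m : ℤ) < -k) :=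
    disjoint_filter.2 fun k _ h => by omega
  calc ∑ k ∈ s with (m : ℤ) < |k|, ((k : ℝ) ^ 2)⁻¹
      = ∑ k ∈ s with (m : ℤ) < k, ((k : ℝ) ^ 2)⁻¹
        + ∑ k ∈ (s.map (Equiv.neg ℤ).toEmbedding) with (m : ℤ) < k, ((k : ℝ) ^ 2)⁻¹ := by
        rw [hsplit, sum_union hdisj, filter_map, sum_map]
        simp
    _ ≤ (m : ℝ)⁻¹ + (m : ℝ)⁻¹ :=
        add_le_add (sum_filter_lt_inv_sq_le s hm) (sum_filter_lt_inv_sq_le _ hm)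
    _ = 2 / m := by ring

theorem mul_abs_le_norm_exp_I_mul_sub_one {x : ℝ} (hx : |x| ≤ Real.pi) :
    2 / Real.pi * |x| ≤ ‖Complex.exp (Complex.I * x) - 1‖ := by
  have hx2 : |x / 2| ≤ Real.pi / 2 := by rw [abs_div, abs_two]; linarith
  rw [Complex.norm_exp_I_mul_ofReal_sub_one, norm_mul, Real.norm_eq_abs, abs_two, Real.norm_eq_abs]
  have := Real.mul_abs_le_abs_sin hx2
  rw [abs_div, abs_two] at this
  linarith

theorem geom_sum_Ico_exp {θ : ℂ} (h : exp θ ≠ 1) (K : ℕ) :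
    ∑ j ∈ Ico (-(K : ℤ)) K, exp θ ^ j = (exp (K * θ) - exp (-(K * θ))) / (exp θ - 1) := by
  rw [geom_sum_Ico_zpow (exp_ne_zero θ) h (by omega), ← exp_int_mul, ← exp_int_mul]
  push_cast
  ring_nf

theorem norm_geom_sum_Ico_exp_I_mul_le {x : ℝ} (hx : |x| ≤ Real.pi) (hx0 : x ≠ 0) (K : ℕ) :
    ‖∑ j ∈ Ico (-(K : ℤ)) K, exp (I * x) ^ j‖ ≤ Real.pi / |x| := by
  have hden : 2 / Real.pi * |x| ≤ ‖exp (I * x) - 1‖ := mul_abs_le_norm_exp_I_mul_sub_one hx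
  have hden_pos : 0 < 2 / Real.pi * |x| := by positivity
  have hne : exp (I * x) ≠ 1 := fun h => by rw [h, sub_self, norm_zero] at hden; linarith
  have hnum : ‖exp (K * (I * x)) - exp (-(K * (I * x)))‖ ≤ 2 := by
    have hunit : ∀ y : ℝ, ‖exp (I * y)‖ = 1 := norm_exp_I_mul_ofReal
    calc _ ≤ ‖exp (I * (K * x : ℝ))‖ + ‖exp (I * (-(K * x) : ℝ))‖ := by
          refine (norm_sub_le _ _).trans_eq ?_
          push_cast
          ring_nf
      _ = 2 := by rw [hunit, hunit]; norm_num
  rw [geom_sum_Ico_exp hne, norm_div]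
  calc _ ≤ 2 / (2 / Real.pi * |x|) := div_le_div₀ zero_le_two hnum hden_pos hden
    _ = Real.pi / |x| := by field_simp

theorem two_mul_abs_le_of_mem_gridS {N : ℕ} {k : ℤ} (hk : k ∈ gridS N) : 2 * |k| ≤ N := by
  simp only [gridS, mem_Icc] at hk
  rcases abs_cases k with ⟨h, -⟩ | ⟨h, -⟩ <;> omega

theorem filter_gridS_eq_Ico {N K : ℕ} {t₀ : ℝ} (ht₀ : 0 < t₀) (h2K : 2 * K ≤ N) :
    (gridS N).filter (fun k : ℤ => -(K * t₀) ≤ t₀ * k ∧ t₀ * k < K * t₀) = Ico (-(K : ℤ)) K := by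
  ext k
  have hreal : (-(K * t₀) ≤ t₀ * k ∧ t₀ * k < K * t₀) ↔ (-(K : ℤ) ≤ k ∧ k < K) := by
    rw [mul_comm t₀, ← neg_mul, mul_le_mul_iff_left₀ ht₀, mul_lt_mul_iff_left₀ ht₀]
    exact_mod_cast Iff.rfl
  simp only [mem_filter, hreal, gridS, mem_Icc, mem_Ico]
  omega

theorem sum_gridS_exp_mul_ite_eq_geom_sum {N K : ℕ} {t₀ : ℝ} (ht₀ : 0 < t₀) (h2K : 2 * K ≤ N)
    (c : ℂ) (ω : ℝ) :
    ∑ k ∈ gridS N, exp (-(I * ω * ((t₀ * k : ℝ) : ℂ))) *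
        (if -(K * t₀) ≤ t₀ * k ∧ t₀ * k < K * t₀ then c else 0) =
      c * ∑ k ∈ Ico (-(K : ℤ)) K, exp (-(I * ω * t₀)) ^ k := by
  simp_rw [mul_ite, mul_zero, ← sum_filter, filter_gridS_eq_Ico ht₀ h2K, mul_sum]
  refine sum_congr rfl fun k _ => ?_
  rw [← exp_int_mul]
  push_cast
  ring_nf

theorem dft_uniform_eq_geom_sum {N K : ℕ} {t₀ : ℝ} (ht₀ : 0 < t₀) (h2K : 2 * K ≤ N)
    {f fhat : ℝ → ℂ}
    (hf : ∀ t : ℝ, f t =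
      if -(K * t₀) ≤ t ∧ t < K * t₀ then (((√(2 * (K * t₀) / t₀))⁻¹ : ℝ) : ℂ) else 0)
    (hfhat : ∀ ω : ℝ, fhat ω = (((√N)⁻¹ : ℝ) : ℂ) *
      ∑ k ∈ gridS N, exp (-(I * (ω : ℂ) * ((t₀ * k : ℝ) : ℂ))) * f (t₀ * k)) (ω : ℝ) :
    fhat ω = (((√(2 * (K * t₀) * N / t₀))⁻¹ : ℝ) : ℂ) *
      ∑ k ∈ Ico (-(K : ℤ)) K, exp (-(I * ω * t₀)) ^ k := by
  have hsqrt : (√N)⁻¹ * (√(2 * (K * t₀) / t₀))⁻¹ = (√(2 * (K * t₀) * N / t₀))⁻¹ := by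
    rw [← mul_inv, ← Real.sqrt_mul (Nat.cast_nonneg N)]
    ring_nf
  simp only [hfhat, hf, sum_gridS_exp_mul_ite_eq_geom_sum ht₀ h2K, ← hsqrt]
  push_cast
  ring

theorem norm_geom_sum_Ico_exp_gridS_le {N : ℕ} {ω₀ t₀ : ℝ} (hN : 0 < N)
    (hωt : ω₀ * t₀ = 2 * Real.pi / N) {k : ℤ} (hk : k ∈ gridS N) (hk0 : k ≠ 0) (K : ℕ) :
    ‖∑ j ∈ Ico (-(K : ℤ)) K, exp (-(I * ((ω₀ * k : ℝ) : ℂ) * t₀)) ^ j‖ ≤ N / (2 * |(k : ℝ)|) := by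
  have hN0 : (0 : ℝ) < N := by exact_mod_cast hN
  set x : ℝ := -(2 * Real.pi * k / N)
  have hexp : -(I * ((ω₀ * k : ℝ) : ℂ) * t₀) = I * x := by
    have : (ω₀ * k * t₀ : ℂ) = 2 * Real.pi * k / N := by
      exact_mod_cast (by rw [mul_right_comm, hωt]; ring : ω₀ * k * t₀ = 2 * Real.pi * k / N)
    simp only [x]
    push_cast
    linear_combination (-I) * this
  have hxabs : |x| = 2 * Real.pi * |(k : ℝ)| / N := by
    simp only [x, abs_neg, abs_div, abs_mul, abs_of_pos Real.two_pi_pos, Nat.abs_cast]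
  have hk2 : 2 * |(k : ℝ)| ≤ N := by exact_mod_cast two_mul_abs_le_of_mem_gridS hk
  have hxπ : |x| ≤ Real.pi := by
    rw [hxabs, div_le_iff₀ hN0]
    nlinarith [Real.pi_pos]
  have hx0 : x ≠ 0 := by simp [x, hk0, Real.pi_ne_zero, hN.ne']
  rw [hexp]
  refine (norm_geom_sum_Ico_exp_I_mul_le hxπ hx0 K).trans_eq ?_
  rw [hxabs]
  field_simp

theorem sq_norm_uniform_geom_sum_gridS_le {N K : ℕ} {ω₀ t₀ : ℝ} (hN : 0 < N) (hK : 0 < K)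
    (ht₀ : 0 < t₀) (hωt : ω₀ * t₀ = 2 * Real.pi / N) {k : ℤ} (hk : k ∈ gridS N) (hk0 : k ≠ 0) :
    ‖(((√(2 * (K * t₀) * N / t₀))⁻¹ : ℝ) : ℂ) *
        ∑ j ∈ Ico (-(K : ℤ)) K, exp (-(I * ((ω₀ * k : ℝ) : ℂ) * t₀)) ^ j‖ ^ 2 ≤
      N / (8 * K) * ((k : ℝ) ^ 2)⁻¹ := by
  rw [norm_mul, norm_real, Real.norm_of_nonneg (by positivity), mul_pow]
  calc _ ≤ (√(2 * (K * t₀) * N / t₀))⁻¹ ^ 2 * (N / (2 * |(k : ℝ)|)) ^ 2 := by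
        gcongr
        exact norm_geom_sum_Ico_exp_gridS_le hN hωt hk hk0 K
    _ = _ := by
        rw [inv_pow, Real.sq_sqrt (by positivity), div_pow, mul_pow, sq_abs]
        field_simp
        norm_num

theorem stmt12_general (N : ℕ) (hN : 0 < N) (ω₀ t₀ : ℝ) (ht₀ : 0 < t₀)
    (hωt : ω₀ * t₀ = 2 * Real.pi / N) (K : ℕ) (hK : 0 < K) (h2K : 2 * K ≤ N) :
    -- `T = K·t₀`, the uniform weight `f`, and its discrete Fourier transform `f̂`
    ∀ T : ℝ, T = K * t₀ →
    ∀ f : ℝ → ℂ,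
      (∀ t : ℝ, f t = if -T ≤ t ∧ t < T then ((((Real.sqrt (2 * T / t₀))⁻¹ : ℝ)) : ℂ) else 0) →
    ∀ fhat : ℝ → ℂ,
      (∀ ω : ℝ, fhat ω = (((Real.sqrt N)⁻¹ : ℝ) : ℂ) *
        ∑ k ∈ gridS N, Complex.exp (-(Complex.I * (ω : ℂ) * ((t₀ * k : ℝ) : ℂ))) * f (t₀ * k)) →
    -- (i) the closed form of `f̂` on the frequency grid
    (∀ k ∈ gridS N,
      Complex.exp (Complex.I * ((ω₀ * k : ℝ) : ℂ) * (t₀ : ℂ)) ≠ 1 →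
      fhat (ω₀ * k) = (((Real.sqrt (2 * T * N / t₀))⁻¹ : ℝ) : ℂ) *
        (Complex.exp (-(Complex.I * ((ω₀ * k : ℝ) : ℂ) * (T : ℂ))) -
          Complex.exp (Complex.I * ((ω₀ * k : ℝ) : ℂ) * (T : ℂ))) /
        (Complex.exp (-(Complex.I * ((ω₀ * k : ℝ) : ℂ) * (t₀ : ℂ))) - 1)) ∧
    -- (ii) the tail bound
    (∀ m : ℕ, 0 < m →
      ∑ k ∈ (gridS N).filter (fun k => (m : ℤ) < |k|), ‖fhat (ω₀ * k)‖ ^ 2 ≤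
        Real.pi / (2 * m * ω₀ * T)) := by
  intro T hT f hf fhat hfhat
  subst hT
  have hfhat' := dft_uniform_eq_geom_sum ht₀ h2K hf hfhat
  refine ⟨fun k _ hk => ?_, fun m hm => ?_⟩
  · rw [hfhat', geom_sum_Ico_exp (by rwa [exp_neg, inv_ne_one])]
    push_cast
    ring_nf
  calc _ ≤ ∑ k ∈ (gridS N).filter (fun k => (m : ℤ) < |k|), N / (8 * K) * ((k : ℝ) ^ 2)⁻¹ := by
        refine sum_le_sum fun k hk => ?_
        obtain ⟨hkS, hmk⟩ := mem_filter.1 hk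
        rw [hfhat']
        have hk0 : k ≠ 0 := by rintro rfl; simp only [abs_zero] at hmk; omega
        exact sq_norm_uniform_geom_sum_gridS_le hN hK ht₀ hωt hkS hk0
    _ ≤ N / (8 * K) * (2 / m) := by
        rw [← mul_sum]
        gcongr
        exact sum_filter_lt_abs_inv_sq_le _ hm.ne'
    _ = Real.pi / (2 * m * ω₀ * (K * t₀)) := by
        have hN0 : (N : ℝ) ≠ 0 := by positivity
        rw [eq_div_iff hN0] at hωt
        have hω₀ : ω₀ ≠ 0 := by rintro rfl; linarith [Real.pi_pos]
        field_simp
        linear_combination 4 * hωt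

/-- Closed form and tail bound for the discrete Fourier transform of the
uniform weight `f(t̄) = (2T/t₀)^{-1/2}·𝟙(-T ≤ t̄ < T)` with `T = K·t₀`, `2K ≤ N`. -/
theorem stmt12 (N : ℕ) (hN : 0 < N) (ω₀ t₀ : ℝ) (hω₀ : 0 < ω₀) (ht₀ : 0 < t₀)
    (hωt : ω₀ * t₀ = 2 * Real.pi / N) (K : ℕ) (hK : 0 < K) (h2K : 2 * K ≤ N) :
    -- `T = K·t₀`, the uniform weight `f`, and its discrete Fourier transform `f̂`
    ∀ T : ℝ, T = K * t₀ →
    ∀ f : ℝ → ℂ,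
      (∀ t : ℝ, f t = if -T ≤ t ∧ t < T then ((((Real.sqrt (2 * T / t₀))⁻¹ : ℝ)) : ℂ) else 0) →
    ∀ fhat : ℝ → ℂ,
      (∀ ω : ℝ, fhat ω = (((Real.sqrt N)⁻¹ : ℝ) : ℂ) *
        ∑ k ∈ gridS N, Complex.exp (-(Complex.I * (ω : ℂ) * ((t₀ * k : ℝ) : ℂ))) * f (t₀ * k)) →
    -- (i) the closed form of `f̂` on the frequency grid
    (∀ k ∈ gridS N,
      Complex.exp (Complex.I * ((ω₀ * k : ℝ) : ℂ) * (t₀ : ℂ)) ≠ 1 →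
      fhat (ω₀ * k) = (((Real.sqrt (2 * T * N / t₀))⁻¹ : ℝ) : ℂ) *
        (Complex.exp (-(Complex.I * ((ω₀ * k : ℝ) : ℂ) * (T : ℂ))) -
          Complex.exp (Complex.I * ((ω₀ * k : ℝ) : ℂ) * (T : ℂ))) /
        (Complex.exp (-(Complex.I * ((ω₀ * k : ℝ) : ℂ) * (t₀ : ℂ))) - 1)) ∧
    -- (ii) the tail bound
    (∀ m : ℕ, 0 < m →
      ∑ k ∈ (gridS N).filter (fun k => (m : ℤ) < |k|), ‖fhat (ω₀ * k)‖ ^ 2 ≤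
        Real.pi / (2 * m * ω₀ * T)) :=
  stmt12_general N hN ω₀ t₀ ht₀ hωt K hK h2K

end Stmt12
end
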